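/- arXiv:2604.01316 — 2 statements merged into one kernel-verified Lean document; each statement's English description precedes it below -/
import Mathlib

section
/- Let q ∈ ℤ[i] with q ≡ 1 (mod λ³), where λ = 1+i. Then q⁴ ≡ 1 (mod λ⁷), and consequently, q being invertible mod λ⁷, c·q³ ≡ c·q^{-1} (mod λ⁷) for every c ∈ ℤ[i]. In particular, for ℓ ∈ ℤ[i] with ℓ ≡ 1 (mod λ³) and any m ∈ ℤ[i], the condition ℓ²m ≡ 1 (mod λ⁷) is equivalent to m ≡ ℓ^{-2} (mod λ⁷), and ℓ^{-2} ≡ ℓ² (mod λ⁷). -/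
noncomputable section

open scoped Classical
open Complex

abbrev Zi := GaussianInt

def lam : Zi := ⟨1, 1⟩

def Ni (x : Zi) : ℤ := Zsqrtd.norm x

/-- ě(z) = e^{2πi (z + z̄)} -/
def eCheck (z : ℂ) : ℂ := Complex.exp (2 * Real.pi * Complex.I * (z + (starRingEnd ℂ) z))

/-- Quartic residue symbol at a prime modulus: the unique fourth root of unity
congruent to `α ^ ((N π - 1)/4)` modulo `π`. -/
def quarticPrime (α π : Zi) : Zi :=
  if h : ∃ u : Zi, u ^ 4 = 1 ∧ π ∣ α ^ ((Ni π - 1) / 4).toNat - u then h.choose else 0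

/-- Quartic residue symbol `(α/γ)₄`, extended multiplicatively over the prime
factorization of `γ`, and declared `0` when `α, γ` are not coprime. -/
def quarticSym (α γ : Zi) : ℂ :=
  if IsCoprime α γ then
    ((UniqueFactorizationMonoid.factors γ).map
      fun π => GaussianInt.toComplex (quarticPrime α π)).prod
  else 0

/-- Quadratic residue symbol `(α/γ)₂ = (α/γ)₄²`. -/
def quadSym (α γ : Zi) : ℂ := quarticSym α γ ^ 2

/-- Quartic Gauss sum `g₄(ν, c) = Σ_{d mod c} (d/c)₄ ě(ν d / c)`. -/
def g4 (ν : ℂ) (c : Zi) : ℂ :=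
  ∑ᶠ x : Zi ⧸ Ideal.span {c},
    quarticSym (Quotient.out x) c *
      eCheck (ν * GaussianInt.toComplex (Quotient.out x) / GaussianInt.toComplex c)

/-- Quadratic Gauss sum `g₂(ν, c) = Σ_{d mod c} (d/c)₂ ě(ν d / c)`. -/
def g2 (ν : ℂ) (c : Zi) : ℂ :=
  ∑ᶠ x : Zi ⧸ Ideal.span {c},
    quadSym (Quotient.out x) c *
      eCheck (ν * GaussianInt.toComplex (Quotient.out x) / GaussianInt.toComplex c)

/-- Euler totient on `ℤ[i]`. -/
def phiZ (c : Zi) : ℕ := Nat.card ((Zi ⧸ Ideal.span {c})ˣ)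

/-- fourth powers of `q ≡ 1 (mod λ³)` are `1` modulo `λ⁷`, with the
resulting inversion identities. -/
theorem fourth_power_mod_lambda7 (q : Zi) (hq : lam ^ 3 ∣ q - 1) :
    lam ^ 7 ∣ q ^ 4 - 1 ∧
    (∀ c c' : Zi, lam ^ 7 ∣ q * c' - 1 → lam ^ 7 ∣ c * q ^ 3 - c * c') ∧
    (∀ m : Zi, lam ^ 7 ∣ q ^ 2 * m - 1 ↔ lam ^ 7 ∣ m - q ^ 2) := by
  obtain ⟨t, ht⟩ := hq
  have hrel : lam ^ 2 = 2 * lam - 2 := by decide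
  have hq' : q = 1 + lam ^ 3 * t := by linear_combination ht
  subst hq'
  have h1 : lam ^ 7 ∣ (1 + lam ^ 3 * t) ^ 4 - 1 := by
    refine ⟨lam ^ 5 * t ^ 4 - lam ^ 6 * t ^ 3 + (6 - 3 * lam) * t ^ 2 - t, ?_⟩
    linear_combination (t * lam ^ 3 * (lam ^ 2 + 2 * lam + 2) + 3 * lam ^ 6 * t ^ 2 +
      lam ^ 9 * t ^ 3 * (lam ^ 2 + 2 * lam + 2)) * hrel
  set q := 1 + lam ^ 3 * t with hqdef
  have hcop : IsCoprime (lam ^ 7) q := by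
    refine IsCoprime.pow_left ⟨-(lam ^ 2 * t), 1, by ring⟩
  refine ⟨h1, ?_, ?_⟩
  · intro c c' h
    have h2 : lam ^ 7 ∣ q * (q ^ 3 - c') := by
      have := h1.sub h
      have he : q ^ 4 - 1 - (q * c' - 1) = q * (q ^ 3 - c') := by ring
      rwa [he] at this
    have h3 : lam ^ 7 ∣ q ^ 3 - c' := hcop.dvd_of_dvd_mul_left h2
    obtain ⟨w, hw⟩ := h3
    exact ⟨c * w, by linear_combination c * hw⟩
  · intro m
    constructor
    · intro h
      have h2 : lam ^ 7 ∣ q ^ 2 * (m - q ^ 2) := by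
        have := h.sub h1
        have he : q ^ 2 * m - 1 - (q ^ 4 - 1) = q ^ 2 * (m - q ^ 2) := by ring
        rwa [he] at this
      exact (hcop.pow_right (n := 2)).dvd_of_dvd_mul_left h2
    · intro h
      have h2 : lam ^ 7 ∣ q ^ 2 * (m - q ^ 2) + (q ^ 4 - 1) := (h.mul_left _).add h1
      have he : q ^ 2 * (m - q ^ 2) + (q ^ 4 - 1) = q ^ 2 * m - 1 := by ring
      rwa [he] at h2
end
end

section
/- Let q ∈ ℤ[i] with q ≡ 1 (mod λ³) and write q = q₁q₂²q₃³q₄⁴q₅⁴ where all qᵢ ≡ 1 (mod λ³), q₁q₂q₃q₄ is squarefree, the qᵢ (i=1..4) are pairwise coprime, and q₅ | (q₁q₂q₃q₄)^∞. Then the quartic character χ_q := (·/q)₄ factors as χ_q = χ_{q₁} · χ_{q₂}² · conj(χ_{q₃}) · 1_{q₄}, where 1_{q₄} is the trivial character modulo q₄ℤ[i]; in particular χ_q has conductor rad(q)·ℤ[i], and χ_q is primitive if and only if q₄ = 1. -/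
noncomputable section

open scoped Classical
open Complex

/-- `χ_q` factors through the modulus `m`: its values on residues coprime to `q`
depend only on the residue modulo `m`. -/
def FactorsThroughMod (q m : Zi) : Prop :=
  ∀ α β : Zi, IsCoprime α q → IsCoprime β q → m ∣ α - β → quarticSym α q = quarticSym β q

/-
On residues coprime to an odd modulus the quartic symbol is multiplicative in the modulus and
takes values in the fourth roots of unity. Hence in `q = q₁ q₂² q₃³ q₄⁴ q₅⁴` the factors `q₄⁴`
and `q₅⁴` only record coprimality, `(·/q₃)₄³` is the conjugate of `(·/q₃)₄`, and coprimality
to `q₅` follows from coprimality to `q₁q₂q₃q₄` because every prime of `q₅` divides that product.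
Each remaining factor is periodic modulo its `qᵢ`, so already `q₁q₂q₃` is a modulus of `χ_q`.

For minimality, let `π ∣ q₁q₂q₃` be a prime not dividing a modulus `m ∣ q`. Pick `x` with
`(x/π)₄` of order 4 (a quadratic nonresidue of the residue field) and, by the Chinese remainder
theorem, `A ≡ x (mod π)` and `A ≡ 1` modulo the `π`-free part of `q`. Then `χ_q(A) = χ_q(1) = 1`,
whereas the factorization gives `(x/π)₄`, `(x/π)₄²` or `conj (x/π)₄`, none of which is `1`:
by squarefreeness `π` divides exactly one `qᵢ`, and only once. If `q₄ ≠ 1`, then `q₁q₂q₃` is a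
strictly smaller modulus, since the only unit congruent to `1` modulo `λ³` is `1`.
-/
open UniqueFactorizationMonoid

lemma Prime.not_dvd_of_isCoprime {R : Type*} [CommSemiring R] {p a b : R} (hp : Prime p)
    (hab : IsCoprime a b) (ha : p ∣ a) : ¬ p ∣ b :=
  fun hb => hp.not_isUnit (hab.isUnit_of_dvd' ha hb)

lemma IsCoprime.exists_dvd_sub_and_dvd_sub {R : Type*} [CommRing R] {a b : R}
    (h : IsCoprime a b) (x y : R) : ∃ z, a ∣ z - x ∧ b ∣ z - y := by
  obtain ⟨u, v, huv⟩ := h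
  exact ⟨u * a * y + v * b * x, ⟨u * (y - x), by linear_combination x * huv⟩,
    ⟨v * (x - y), by linear_combination y * huv⟩⟩

lemma IsCoprime.of_isCoprime_of_forall_prime_dvd {R : Type*} [CommRing R] [IsDomain R]
    [IsPrincipalIdealRing R] {a b c : R} (h : IsCoprime a c) (hb : b ≠ 0)
    (hbc : ∀ p, Prime p → p ∣ b → p ∣ c) : IsCoprime a b :=
  isCoprime_of_prime_dvd (fun hab => hb hab.2)
    fun p hp hpa hpb => hp.not_dvd_of_isCoprime h hpa (hbc p hp hpb)

lemma Squarefree.dvd_of_forall_prime_dvd {R : Type*} [EuclideanDomain R] {r m : R}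
    (hr : Squarefree r) (h : ∀ p, Prime p → p ∣ r → p ∣ m) : r ∣ m := by
  obtain ⟨s, hs⟩ := EuclideanDomain.gcd_dvd_left r m
  by_cases hsu : IsUnit s
  · exact (Associated.symm ⟨hsu.unit, hs.symm⟩).dvd.trans (EuclideanDomain.gcd_dvd_right r m)
  have hs0 : s ≠ 0 := by rintro rfl; exact hr.ne_zero (by simpa using hs)
  obtain ⟨p, hp, hps⟩ := WfDvdMonoid.exists_irreducible_factor hsu hs0
  have hpr : p ∣ r := hs ▸ hps.mul_left _
  have hpg : p ∣ EuclideanDomain.gcd r m :=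
    EuclideanDomain.dvd_gcd hpr (h p hp.prime hpr)
  exact absurd (hr p (hs ▸ mul_dvd_mul hpg hps)) hp.not_isUnit

lemma Complex.conj_eq_pow_three_of_pow_four_eq_one {z : ℂ} (hz : z ^ 4 = 1) :
    (starRingEnd ℂ) z = z ^ 3 := by
  rw [← Complex.inv_eq_conj (Complex.norm_eq_one_of_pow_eq_one hz four_ne_zero)]
  exact inv_eq_of_mul_eq_one_right (by rw [← pow_succ']; exact hz)

@[simps]
def GaussianInt.equivFun : Zi ≃ₗ[ℤ] (Fin 2 → ℤ) where
  toFun z := ![z.re, z.im]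
  invFun v := ⟨v 0, v 1⟩
  map_add' a b := by ext i; fin_cases i <;> rfl
  map_smul' c a := by ext i; fin_cases i <;> simp
  left_inv z := rfl
  right_inv v := by ext i; fin_cases i <;> rfl

instance : Module.Free ℤ Zi := .of_basis (.ofEquivFun GaussianInt.equivFun)
instance : Module.Finite ℤ Zi := .of_basis (.ofEquivFun GaussianInt.equivFun)

lemma algebraNorm_eq_Ni (x : Zi) : Algebra.norm ℤ x = Ni x := by
  rw [Algebra.norm_eq_matrix_det (.ofEquivFun GaussianInt.equivFun), Matrix.det_fin_two]
  simp [Algebra.leftMulMatrix_eq_repr_mul, Ni, Zsqrtd.norm]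

lemma card_quotient_span_singleton (x : Zi) :
    Nat.card (Zi ⧸ Ideal.span {x}) = (Ni x).natAbs := by
  rw [← Submodule.cardQuot_apply, ← Ideal.absNorm_apply, Ideal.absNorm_span_singleton,
    algebraNorm_eq_Ni]

lemma GaussianInt.isUnit_iff {u : Zi} :
    IsUnit u ↔ u = 1 ∨ u = -1 ∨ u = ⟨0, 1⟩ ∨ u = ⟨0, -1⟩ := by
  constructor
  · intro hu
    have h1 := (Zsqrtd.norm_eq_one_iff' (by norm_num) u).mpr hu
    obtain ⟨a, b⟩ := u
    simp only [Zsqrtd.norm_def, Zsqrtd.ext_iff] at h1 ⊢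
    obtain ⟨ha₁, ha₂⟩ : -1 ≤ a ∧ a ≤ 1 :=
      ⟨by nlinarith [mul_self_nonneg b], by nlinarith [mul_self_nonneg b]⟩
    obtain ⟨hb₁, hb₂⟩ : -1 ≤ b ∧ b ≤ 1 :=
      ⟨by nlinarith [mul_self_nonneg a], by nlinarith [mul_self_nonneg a]⟩
    interval_cases a <;> interval_cases b <;> simp_all
  · rintro (rfl | rfl | rfl | rfl) <;> rw [← Zsqrtd.norm_eq_one_iff] <;> decide

lemma GaussianInt.not_isUnit_two : ¬ IsUnit (2 : Zi) := by
  rw [← Zsqrtd.norm_eq_one_iff]; decide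

lemma dvd_of_norm_dvd {x : Zi} {n : ℤ} (h : Zsqrtd.norm x ∣ n) : x ∣ (n : Zi) :=
  (Dvd.intro _ (Zsqrtd.norm_eq_mul_conj x).symm).trans (Int.cast_dvd_cast _ _ h)

lemma ne_zero_of_isCoprime_two {γ : Zi} (hγ : IsCoprime γ 2) : γ ≠ 0 := by
  rintro rfl
  exact GaussianInt.not_isUnit_two (isCoprime_zero_left.mp hγ)

lemma isCoprime_two_of_lam_pow_three_dvd_sub_one {x : Zi} (h : lam ^ 3 ∣ x - 1) :
    IsCoprime x 2 := by
  obtain ⟨t, ht⟩ := h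
  have hlam : lam ^ 3 = 2 * ⟨-1, 1⟩ := by decide
  exact ⟨1, -(⟨-1, 1⟩ * t), by linear_combination ht + t * hlam⟩

lemma eq_one_of_isUnit_of_lam_pow_three_dvd_sub_one {u : Zi} (hu : IsUnit u)
    (h : lam ^ 3 ∣ u - 1) : u = 1 := by
  have hnorm := map_dvd Zsqrtd.normMonoidHom h
  rcases GaussianInt.isUnit_iff.mp hu with rfl | rfl | rfl | rfl
  · rfl
  all_goals revert hnorm; decide

def quarticExp (π : Zi) : ℕ := ((Ni π - 1) / 4).toNat

section ResidueField

variable (π : Zi)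

lemma ringChar_residueField_ne_two (h2 : ¬ π ∣ 2) : ringChar (Zi ⧸ Ideal.span {π}) ≠ 2 := by
  intro h
  have h0 := ringChar.Nat.cast_ringChar (R := Zi ⧸ Ideal.span {π})
  rw [h, Nat.cast_ofNat, ← map_ofNat (Ideal.Quotient.mk _), Ideal.Quotient.eq_zero_iff_dvd] at h0
  exact h2 h0

variable [hπ : Fact (Prime π)]

instance : (Ideal.span {π}).IsMaximal :=
  PrincipalIdealRing.isMaximal_of_irreducible hπ.out.irreducible

instance : Field (Zi ⧸ Ideal.span {π}) := Ideal.Quotient.field _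

instance : Fintype (Zi ⧸ Ideal.span {π}) :=
  have : Finite (Zi ⧸ Ideal.span {π}) := Nat.finite_of_card_ne_zero <| by
    rw [card_quotient_span_singleton, Int.natAbs_ne_zero]
    exact GaussianInt.norm_eq_zero.not.mpr hπ.out.ne_zero
  Fintype.ofFinite _

lemma card_residueField : Fintype.card (Zi ⧸ Ideal.span {π}) = (Ni π).natAbs := by
  rw [Fintype.card_eq_nat_card, card_quotient_span_singleton]

lemma card_residueField_mod_four (h2 : ¬ π ∣ 2) :
    Fintype.card (Zi ⧸ Ideal.span {π}) % 4 = 1 := by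
  have hodd := FiniteField.odd_card_of_char_ne_two (ringChar_residueField_ne_two π h2)
  have hsq : IsSquare (-1 : Zi ⧸ Ideal.span {π}) :=
    ⟨Ideal.Quotient.mk _ ⟨0, 1⟩, by
      rw [← map_mul, show (⟨0, 1⟩ * ⟨0, 1⟩ : Zi) = -1 by decide, map_neg, map_one]⟩
  have := FiniteField.isSquare_neg_one_iff.mp hsq
  omega

lemma four_mul_quarticExp (h2 : ¬ π ∣ 2) :
    4 * quarticExp π = Fintype.card (Zi ⧸ Ideal.span {π}) - 1 := by
  have h4 := card_residueField_mod_four π h2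
  have h0 : 0 ≤ Ni π := GaussianInt.norm_nonneg π
  rw [card_residueField] at h4 ⊢
  unfold quarticExp
  omega

lemma exists_pow_two_mul_quarticExp_ne_one (h2 : ¬ π ∣ 2) :
    ∃ a : Zi ⧸ Ideal.span {π}, a ≠ 0 ∧ a ^ (2 * quarticExp π) ≠ 1 := by
  have hchar := ringChar_residueField_ne_two π h2
  obtain ⟨a, ha⟩ := FiniteField.exists_nonsquare hchar
  have ha0 : a ≠ 0 := by rintro rfl; exact ha ⟨0, by simp⟩
  have hhalf : Fintype.card (Zi ⧸ Ideal.span {π}) / 2 = 2 * quarticExp π := by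
    have := four_mul_quarticExp π h2
    omega
  exact ⟨a, ha0, by rwa [FiniteField.isSquare_iff hchar ha0, hhalf] at ha⟩

end ResidueField

section QuarticPrime

variable {π : Zi}

lemma eq_of_pow_four_eq_one_of_dvd_sub (hπ : Prime π) (h2 : ¬ π ∣ 2) {u v : Zi} (hu : u ^ 4 = 1)
    (hv : v ^ 4 = 1) (huv : π ∣ u - v) : u = v := by
  by_contra hne
  have hunit {w : Zi} (hw : w ^ 4 = 1) : IsUnit w := IsUnit.of_pow_eq_one hw (by norm_num)
  have h4 : Zsqrtd.norm (u - v) ∣ 2 * 2 := by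
    rcases GaussianInt.isUnit_iff.mp (hunit hu) with rfl | rfl | rfl | rfl <;>
      rcases GaussianInt.isUnit_iff.mp (hunit hv) with rfl | rfl | rfl | rfl <;>
      first | exact absurd rfl hne | decide
  have := huv.trans (dvd_of_norm_dvd h4)
  push_cast at this
  exact h2 ((hπ.dvd_or_dvd this).elim id id)

lemma exists_pow_four_eq_one_dvd_sub (hπ : Prime π) (h2 : ¬ π ∣ 2) {α : Zi} (hα : ¬ π ∣ α) :
    ∃ u : Zi, u ^ 4 = 1 ∧ π ∣ α ^ quarticExp π - u := by
  have := Fact.mk hπ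
  set x := α ^ quarticExp π
  have hfermat : π ∣ x ^ 4 - 1 := by
    rw [← Ideal.Quotient.eq_zero_iff_dvd, map_sub, map_one, map_pow, map_pow, ← pow_mul,
      mul_comm, four_mul_quarticExp π h2, FiniteField.pow_card_sub_one_eq_one _
        ((Ideal.Quotient.eq_zero_iff_dvd _ _).not.mpr hα), sub_self]
  have hi : (⟨0, 1⟩ : Zi) ^ 2 = -1 := by decide
  have hfac : x ^ 4 - 1 = (x - 1) * (x - -1) * ((x - ⟨0, 1⟩) * (x - -⟨0, 1⟩)) := by
    linear_combination (x ^ 2 - 1) * hi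
  rw [hfac] at hfermat
  rcases hπ.dvd_or_dvd hfermat with h | h <;> rcases hπ.dvd_or_dvd h with h | h
  exacts [⟨1, by norm_num, h⟩, ⟨-1, by norm_num, h⟩, ⟨⟨0, 1⟩, by decide, h⟩,
    ⟨-⟨0, 1⟩, by decide, h⟩]

lemma quarticPrime_spec (hπ : Prime π) (h2 : ¬ π ∣ 2) {α : Zi} (hα : ¬ π ∣ α) :
    quarticPrime α π ^ 4 = 1 ∧ π ∣ α ^ quarticExp π - quarticPrime α π := by
  have h := exists_pow_four_eq_one_dvd_sub hπ h2 hα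
  unfold quarticExp at h ⊢
  rw [quarticPrime, dif_pos h]
  exact h.choose_spec

lemma quarticPrime_eq_of_dvd_sub (hπ : Prime π) (h2 : ¬ π ∣ 2) {α u : Zi} (hα : ¬ π ∣ α)
    (hu : u ^ 4 = 1) (hαu : π ∣ α ^ quarticExp π - u) : quarticPrime α π = u := by
  obtain ⟨h4, hα'⟩ := quarticPrime_spec hπ h2 hα
  refine eq_of_pow_four_eq_one_of_dvd_sub hπ h2 h4 hu ?_
  simpa only [sub_sub_sub_cancel_left] using dvd_sub hαu hα'

lemma quarticPrime_congr (hπ : Prime π) (h2 : ¬ π ∣ 2) {α β : Zi} (hα : ¬ π ∣ α)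
    (hαβ : π ∣ α - β) : quarticPrime α π = quarticPrime β π := by
  have hβ : ¬ π ∣ β := fun hβ => hα ((dvd_sub_left hβ).mp hαβ)
  obtain ⟨h4, hα'⟩ := quarticPrime_spec hπ h2 hα
  refine (quarticPrime_eq_of_dvd_sub hπ h2 hβ h4 ?_).symm
  simpa only [sub_sub_sub_cancel_left] using
    dvd_sub hα' (hαβ.trans (sub_dvd_pow_sub_pow _ _ (quarticExp π)))

lemma quarticPrime_of_associated (hπ : Prime π) (h2 : ¬ π ∣ 2) {α π' : Zi} (hα : ¬ π ∣ α)
    (h : Associated π π') : quarticPrime α π = quarticPrime α π' := by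
  have hexp : quarticExp π = quarticExp π' := by
    simp only [quarticExp, Ni, Zsqrtd.norm_eq_of_associated (by norm_num) h]
  obtain ⟨h4, hα'⟩ := quarticPrime_spec hπ h2 hα
  refine (quarticPrime_eq_of_dvd_sub (h.prime hπ) (h.dvd_iff_dvd_left.not.mp h2)
    (h.dvd_iff_dvd_left.not.mp hα) h4 ?_).symm
  rw [← hexp]
  exact h.dvd_iff_dvd_left.mp hα'

lemma quarticPrime_one (hπ : Prime π) (h2 : ¬ π ∣ 2) : quarticPrime 1 π = 1 :=
  quarticPrime_eq_of_dvd_sub hπ h2 hπ.not_dvd_one (one_pow _) (by simp)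

lemma exists_quarticPrime_sq_ne_one (hπ : Prime π) (h2 : ¬ π ∣ 2) :
    ∃ x : Zi, ¬ π ∣ x ∧ quarticPrime x π ^ 2 ≠ 1 := by
  have := Fact.mk hπ
  obtain ⟨a, ha0, ha⟩ := exists_pow_two_mul_quarticExp_ne_one π h2
  obtain ⟨x, rfl⟩ := Ideal.Quotient.mk_surjective a
  have hx : ¬ π ∣ x := (Ideal.Quotient.eq_zero_iff_dvd _ _).not.mp ha0
  refine ⟨x, hx, fun hu => ha ?_⟩
  have hxu := (quarticPrime_spec hπ h2 hx).2
  rw [← Ideal.Quotient.eq_zero_iff_dvd, map_sub, sub_eq_zero, map_pow] at hxu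
  rw [pow_mul', hxu, ← map_pow, hu, map_one]

end QuarticPrime

section QuarticSym

variable {α β γ δ : Zi}

lemma quarticSym_of_not_isCoprime (h : ¬ IsCoprime α γ) : quarticSym α γ = 0 := if_neg h

lemma quarticSym_pow_four (hγ : IsCoprime γ 2) :
    quarticSym α γ ^ 4 = if IsCoprime α γ then 1 else 0 := by
  by_cases h : IsCoprime α γ
  · rw [quarticSym, if_pos h, if_pos h, ← Multiset.prod_map_pow]
    refine Multiset.prod_eq_one fun z hz => ?_
    obtain ⟨π, hπ, rfl⟩ := Multiset.mem_map.mp hz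
    have hπ' := prime_of_factor π hπ
    rw [← map_pow, (quarticPrime_spec hπ' (hπ'.not_dvd_of_isCoprime hγ (dvd_of_mem_factors hπ))
      (hπ'.not_dvd_of_isCoprime h.symm (dvd_of_mem_factors hπ))).1, map_one]
  · simp [quarticSym_of_not_isCoprime h, h]

lemma conj_quarticSym (hγ : IsCoprime γ 2) :
    (starRingEnd ℂ) (quarticSym α γ) = quarticSym α γ ^ 3 := by
  by_cases h : IsCoprime α γ
  · exact Complex.conj_eq_pow_three_of_pow_four_eq_one (by rw [quarticSym_pow_four hγ, if_pos h])
  · simp [quarticSym_of_not_isCoprime h]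

lemma quarticSym_mul (hγ : IsCoprime γ 2) (hδ : IsCoprime δ 2) :
    quarticSym α (γ * δ) = quarticSym α γ * quarticSym α δ := by
  by_cases h : IsCoprime α (γ * δ)
  · rw [quarticSym, if_pos h, quarticSym, if_pos (h.of_isCoprime_of_dvd_right (dvd_mul_right _ _)),
      quarticSym, if_pos (h.of_isCoprime_of_dvd_right (dvd_mul_left _ _)), ← Multiset.prod_add,
      ← Multiset.map_add]
    congr 1
    rw [← Multiset.rel_eq, Multiset.rel_map]
    refine (factors_mul (ne_zero_of_isCoprime_two hγ) (ne_zero_of_isCoprime_two hδ)).mono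
      fun π hπ π' _ hππ' => congrArg _ ?_
    have hπ' := prime_of_factor π hπ
    exact quarticPrime_of_associated hπ'
      (hπ'.not_dvd_of_isCoprime (hγ.mul_left hδ) (dvd_of_mem_factors hπ))
      (hπ'.not_dvd_of_isCoprime h.symm (dvd_of_mem_factors hπ)) hππ'
  · rw [quarticSym_of_not_isCoprime h]
    rw [IsCoprime.mul_right_iff, not_and_or] at h
    rcases h with h | h <;> simp [quarticSym_of_not_isCoprime h]

lemma quarticSym_one_right : quarticSym α 1 = 1 := by
  simp [quarticSym, factors_one, isCoprime_one_right]

lemma quarticSym_pow (hγ : IsCoprime γ 2) (n : ℕ) :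
    quarticSym α (γ ^ n) = quarticSym α γ ^ n := by
  induction n with
  | zero => simp [quarticSym_one_right]
  | succ n ih => rw [pow_succ, quarticSym_mul hγ.pow_left hγ, ih, pow_succ]

lemma quarticSym_congr (hγ : IsCoprime γ 2) (hα : IsCoprime α γ) (hαβ : γ ∣ α - β) :
    quarticSym α γ = quarticSym β γ := by
  obtain ⟨t, ht⟩ := hαβ
  have hβ : IsCoprime β γ := by
    rw [show β = α + γ * -t by linear_combination -ht]
    exact IsCoprime.add_mul_left_left_iff.mpr hα
  rw [quarticSym, if_pos hα, quarticSym, if_pos hβ]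
  refine congrArg _ (Multiset.map_congr rfl fun π hπ => congrArg _ ?_)
  have hπ' := prime_of_factor π hπ
  exact quarticPrime_congr hπ' (hπ'.not_dvd_of_isCoprime hγ (dvd_of_mem_factors hπ))
    (hπ'.not_dvd_of_isCoprime hα.symm (dvd_of_mem_factors hπ))
    ((dvd_of_mem_factors hπ).trans ⟨t, ht⟩)

lemma quarticSym_one_left (hγ : IsCoprime γ 2) : quarticSym 1 γ = 1 := by
  rw [quarticSym, if_pos isCoprime_one_left]
  refine Multiset.prod_eq_one fun z hz => ?_
  obtain ⟨π, hπ, rfl⟩ := Multiset.mem_map.mp hz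
  have hπ' := prime_of_factor π hπ
  rw [quarticPrime_one hπ' (hπ'.not_dvd_of_isCoprime hγ (dvd_of_mem_factors hπ)), map_one]

lemma quarticSym_eq_one_of_dvd_sub_one (hγ : IsCoprime γ 2) (h : γ ∣ α - 1) :
    quarticSym α γ = 1 :=
  (quarticSym_congr hγ isCoprime_one_left (dvd_sub_comm.mp h)).symm.trans (quarticSym_one_left hγ)

lemma quarticSym_prime {π : Zi} (hπ : Prime π) (h2 : ¬ π ∣ 2) (hα : ¬ π ∣ α) :
    quarticSym α π = GaussianInt.toComplex (quarticPrime α π) := by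
  obtain ⟨π', hππ', hfac⟩ := factors_eq_singleton_of_irreducible hπ.irreducible
  rw [quarticSym, if_pos (hπ.coprime_iff_not_dvd.mpr hα).symm, hfac, Multiset.map_singleton,
    Multiset.prod_singleton, quarticPrime_of_associated hπ h2 hα hππ']

end QuarticSym

lemma exists_quarticSym_eq_ite {π q x : Zi} (hπ : Prime π) (h2 : ¬ π ∣ 2) (hq : q ≠ 0)
    (hx : ¬ π ∣ x) :
    ∃ A, IsCoprime A q ∧ (∀ m, m ∣ q → ¬ π ∣ m → m ∣ A - 1) ∧
      ∀ e, e ∣ q → IsCoprime e 2 → ¬ π * π ∣ e →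
        quarticSym A e = if π ∣ e then GaussianInt.toComplex (quarticPrime x π) else 1 := by
  obtain ⟨c, hqc, hπc⟩ := (FiniteMultiplicity.of_prime_left hπ hq).exists_eq_pow_mul_and_not_dvd
  have hc {d : Zi} (hd : d ∣ q) (hπd : ¬ π ∣ d) : d ∣ c :=
    (hπ.coprime_iff_not_dvd.mpr hπd).symm.pow_right.dvd_of_dvd_mul_left (hqc ▸ hd)
  obtain ⟨A, hAx, hA1⟩ := (hπ.coprime_iff_not_dvd.mpr hπc).exists_dvd_sub_and_dvd_sub x 1
  have hπA : ¬ π ∣ A := fun h => hx ((dvd_sub_right h).mp hAx)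
  have hAc : IsCoprime A c := by
    obtain ⟨t, ht⟩ := hA1
    exact ⟨1, -t, by linear_combination ht⟩
  refine ⟨A, hqc ▸ (hπ.coprime_iff_not_dvd.mpr hπA).symm.pow_right.mul_right hAc,
    fun m hm hπm => (hc hm hπm).trans hA1, fun e he he2 hsq => ?_⟩
  split_ifs with hπe
  · obtain ⟨d, rfl⟩ := hπe
    have hπd : ¬ π ∣ d := fun h => hsq (mul_dvd_mul_left π h)
    rw [quarticSym_mul (hπ.coprime_iff_not_dvd.mpr h2) he2.of_mul_left_right,
      quarticSym_prime hπ h2 hπA, quarticSym_eq_one_of_dvd_sub_one he2.of_mul_left_right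
        ((hc ((dvd_mul_left d π).trans he) hπd).trans hA1), mul_one,
      quarticPrime_congr hπ h2 hπA hAx]
  · exact quarticSym_eq_one_of_dvd_sub_one he2 ((hc he hπe).trans hA1)

section Decomposition

variable {q₁ q₂ q₃ q₄ q₅ : Zi}

lemma quarticSym_mul_pow_eq (h₁ : IsCoprime q₁ 2) (h₂ : IsCoprime q₂ 2) (h₃ : IsCoprime q₃ 2)
    (h₄ : IsCoprime q₄ 2) (h₅ : IsCoprime q₅ 2)
    (h5rad : ∀ π : Zi, Prime π → π ∣ q₅ → π ∣ q₁ * q₂ * q₃ * q₄) (α : Zi) :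
    quarticSym α (q₁ * q₂ ^ 2 * q₃ ^ 3 * q₄ ^ 4 * q₅ ^ 4) =
      quarticSym α q₁ * quarticSym α q₂ ^ 2 * (starRingEnd ℂ) (quarticSym α q₃) *
        (if IsCoprime α q₄ then 1 else 0) := by
  simp only [quarticSym_mul, quarticSym_pow, IsCoprime.mul_left_iff, IsCoprime.pow_left, h₁, h₂,
    h₃, h₄, h₅, and_self, quarticSym_pow_four, conj_quarticSym]
  by_cases h5 : IsCoprime α q₅
  · rw [if_pos h5, mul_one]
  have h : ¬ IsCoprime α (q₁ * q₂ * q₃ * q₄) :=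
    fun h => h5 (h.of_isCoprime_of_forall_prime_dvd (ne_zero_of_isCoprime_two h₅) h5rad)
  simp only [IsCoprime.mul_right_iff, not_and_or] at h
  rcases h with ((h | h) | h) | h <;> simp [quarticSym_of_not_isCoprime h, h]

lemma factorsThroughMod_of_mul_dvd {q m : Zi} (h₁ : IsCoprime q₁ 2) (h₂ : IsCoprime q₂ 2)
    (h₃ : IsCoprime q₃ 2) (hq : q₁ * q₂ * q₃ * q₄ ∣ q)
    (hχ : ∀ α, quarticSym α q = quarticSym α q₁ * quarticSym α q₂ ^ 2 *
      (starRingEnd ℂ) (quarticSym α q₃) * (if IsCoprime α q₄ then 1 else 0))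
    (hm : q₁ * q₂ * q₃ ∣ m) : FactorsThroughMod q m := by
  intro α β hα hβ hαβ
  have hdvd {e : Zi} (he : e ∣ q₁ * q₂ * q₃) : e ∣ q ∧ e ∣ α - β :=
    ⟨he.trans ((dvd_mul_right _ _).trans hq), he.trans (hm.trans hαβ)⟩
  have h₁q := hdvd (dvd_mul_of_dvd_left (dvd_mul_right q₁ q₂) q₃)
  have h₂q := hdvd (dvd_mul_of_dvd_left (dvd_mul_left q₂ q₁) q₃)
  have h₃q := hdvd (dvd_mul_left q₃ (q₁ * q₂))
  have h₄q : q₄ ∣ q := (dvd_mul_left _ _).trans hq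
  rw [hχ, hχ, if_pos (hα.of_isCoprime_of_dvd_right h₄q), if_pos (hβ.of_isCoprime_of_dvd_right h₄q),
    quarticSym_congr h₁ (hα.of_isCoprime_of_dvd_right h₁q.1) h₁q.2,
    quarticSym_congr h₂ (hα.of_isCoprime_of_dvd_right h₂q.1) h₂q.2,
    quarticSym_congr h₃ (hα.of_isCoprime_of_dvd_right h₃q.1) h₃q.2]

lemma dvd_of_factorsThroughMod {q m : Zi} (h₁ : IsCoprime q₁ 2) (h₂ : IsCoprime q₂ 2)
    (h₃ : IsCoprime q₃ 2) (hsf : Squarefree (q₁ * q₂ * q₃)) (hq : q₁ * q₂ * q₃ ∣ q) (hq0 : q ≠ 0)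
    (hχ : ∀ α, IsCoprime α q → quarticSym α q =
      quarticSym α q₁ * quarticSym α q₂ ^ 2 * (starRingEnd ℂ) (quarticSym α q₃))
    (hm : m ∣ q) (hmq : FactorsThroughMod q m) : q₁ * q₂ * q₃ ∣ m := by
  refine hsf.dvd_of_forall_prime_dvd fun π hπ hπr => ?_
  by_contra hπm
  have h2 : ¬ π ∣ 2 := hπ.not_dvd_of_isCoprime ((h₁.mul_left h₂).mul_left h₃) hπr
  obtain ⟨x, hx, hx2⟩ := exists_quarticPrime_sq_ne_one hπ h2
  obtain ⟨A, hAq, hA1, hAχ⟩ := exists_quarticSym_eq_ite hπ h2 hq0 hx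
  set u := GaussianInt.toComplex (quarticPrime x π)
  have hu2 : u ^ 2 ≠ 1 := fun h => hx2 (GaussianInt.toComplex_injective (by simpa [u] using h))
  have hu1 : u ≠ 1 := fun h => hu2 (by rw [h, one_pow])
  have hsq (a b : Zi) (hab : a * b ∣ q₁ * q₂ * q₃) (ha : π ∣ a) : ¬ π ∣ b :=
    fun hb => hπ.not_isUnit (hsf π ((mul_dvd_mul ha hb).trans hab))
  have hχA {e : Zi} (he : e ∣ q₁ * q₂ * q₃) (he2 : IsCoprime e 2) :
      quarticSym A e = if π ∣ e then u else 1 :=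
    hAχ e (he.trans hq) he2 fun h => hπ.not_isUnit (hsf π (h.trans he))
  have key := hmq A 1 hAq isCoprime_one_left (hA1 m hm hπm)
  rw [hχ A hAq, hχ 1 isCoprime_one_left, quarticSym_one_left h₁, quarticSym_one_left h₂,
    quarticSym_one_left h₃, hχA (dvd_mul_of_dvd_left (dvd_mul_right q₁ q₂) q₃) h₁,
    hχA (dvd_mul_of_dvd_left (dvd_mul_left q₂ q₁) q₃) h₂, hχA (dvd_mul_left q₃ (q₁ * q₂)) h₃]
    at key
  rcases hπ.dvd_or_dvd hπr with hπ₁₂ | hπ₃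
  · rcases hπ.dvd_or_dvd hπ₁₂ with hπ₁ | hπ₂
    · simp [hπ₁, hsq q₁ q₂ (dvd_mul_right _ _) hπ₁, hsq q₁ q₃ ⟨q₂, by ring⟩ hπ₁] at key
      exact hu1 key
    · simp only [hπ₂, hsq q₂ q₁ ⟨q₃, by ring⟩ hπ₂, hsq q₂ q₃ ⟨q₁, by ring⟩ hπ₂, if_true,
        if_false, one_mul, one_pow, mul_one, map_one] at key
      exact hu2 key
  · simp [hπ₃, hsq q₃ q₁ ⟨q₂, by ring⟩ hπ₃, hsq q₃ q₂ ⟨q₁, by ring⟩ hπ₃] at key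
    exact hu1 (by simpa using congrArg (starRingEnd ℂ) key)

end Decomposition

theorem quartic_char_factorization_general (q q₁ q₂ q₃ q₄ q₅ : Zi)
    (hq : q = q₁ * q₂ ^ 2 * q₃ ^ 3 * q₄ ^ 4 * q₅ ^ 4)
    (h1 : lam ^ 3 ∣ q₁ - 1) (h2 : lam ^ 3 ∣ q₂ - 1) (h3 : lam ^ 3 ∣ q₃ - 1)
    (h4 : lam ^ 3 ∣ q₄ - 1) (h5 : lam ^ 3 ∣ q₅ - 1)
    (hsf : Squarefree (q₁ * q₂ * q₃ * q₄))
    (h5rad : ∀ π : Zi, Prime π → π ∣ q₅ → π ∣ q₁ * q₂ * q₃ * q₄) :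
    (∀ α : Zi, quarticSym α q =
        quarticSym α q₁ * quarticSym α q₂ ^ 2 * (starRingEnd ℂ) (quarticSym α q₃) *
          (if IsCoprime α q₄ then 1 else 0)) ∧
    FactorsThroughMod q (q₁ * q₂ * q₃ * q₄) ∧
    (q₄ = 1 ↔ ∀ m : Zi, m ∣ q → FactorsThroughMod q m → q₁ * q₂ * q₃ * q₄ ∣ m) := by
  have o₁ := isCoprime_two_of_lam_pow_three_dvd_sub_one h1
  have o₂ := isCoprime_two_of_lam_pow_three_dvd_sub_one h2
  have o₃ := isCoprime_two_of_lam_pow_three_dvd_sub_one h3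
  have o₄ := isCoprime_two_of_lam_pow_three_dvd_sub_one h4
  have o₅ := isCoprime_two_of_lam_pow_three_dvd_sub_one h5
  have hχ := hq ▸ quarticSym_mul_pow_eq o₁ o₂ o₃ o₄ o₅ h5rad
  have hq0 : q ≠ 0 := by simp [hq, ne_zero_of_isCoprime_two, o₁, o₂, o₃, o₄, o₅]
  have hrq : q₁ * q₂ * q₃ * q₄ ∣ q := hq ▸ ⟨q₂ * q₃ ^ 2 * q₄ ^ 3 * q₅ ^ 4, by ring⟩
  have hFT (m : Zi) (hm : q₁ * q₂ * q₃ ∣ m) : FactorsThroughMod q m :=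
    factorsThroughMod_of_mul_dvd o₁ o₂ o₃ hrq hχ hm
  refine ⟨hχ, hFT _ (dvd_mul_right _ _), ⟨?_, fun H => ?_⟩⟩
  · rintro rfl m hm hmq
    rw [mul_one] at hsf hrq ⊢
    exact dvd_of_factorsThroughMod o₁ o₂ o₃ hsf hrq hq0
      (fun α _ => by simpa [isCoprime_one_right] using hχ α) hm hmq
  · have h123 : q₁ * q₂ * q₃ * q₄ ∣ q₁ * q₂ * q₃ * 1 := by
      simpa using H _ ((dvd_mul_right _ _).trans hrq) (hFT _ dvd_rfl)
    refine eq_one_of_isUnit_of_lam_pow_three_dvd_sub_one (isUnit_of_dvd_one ?_) h4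
    exact (mul_dvd_mul_iff_left (by simp [ne_zero_of_isCoprime_two, o₁, o₂, o₃])).mp h123

/-- factorization of the quartic character `χ_q`, its conductor
`rad(q) = q₁q₂q₃q₄`, and primitivity iff `q₄ = 1`. -/
theorem quartic_char_factorization (q q₁ q₂ q₃ q₄ q₅ : Zi)
    (hq : q = q₁ * q₂ ^ 2 * q₃ ^ 3 * q₄ ^ 4 * q₅ ^ 4)
    (h1 : lam ^ 3 ∣ q₁ - 1) (h2 : lam ^ 3 ∣ q₂ - 1) (h3 : lam ^ 3 ∣ q₃ - 1)
    (h4 : lam ^ 3 ∣ q₄ - 1) (h5 : lam ^ 3 ∣ q₅ - 1)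
    (hsf : Squarefree (q₁ * q₂ * q₃ * q₄))
    (h12 : IsCoprime q₁ q₂) (h13 : IsCoprime q₁ q₃) (h14 : IsCoprime q₁ q₄)
    (h23 : IsCoprime q₂ q₃) (h24 : IsCoprime q₂ q₄) (h34 : IsCoprime q₃ q₄)
    (h5rad : ∀ π : Zi, Prime π → π ∣ q₅ → π ∣ q₁ * q₂ * q₃ * q₄) :
    (∀ α : Zi, quarticSym α q =
        quarticSym α q₁ * quarticSym α q₂ ^ 2 * (starRingEnd ℂ) (quarticSym α q₃) *
          (if IsCoprime α q₄ then 1 else 0)) ∧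
    FactorsThroughMod q (q₁ * q₂ * q₃ * q₄) ∧
    (q₄ = 1 ↔ ∀ m : Zi, m ∣ q → FactorsThroughMod q m → q₁ * q₂ * q₃ * q₄ ∣ m) :=
  quartic_char_factorization_general q q₁ q₂ q₃ q₄ q₅ hq h1 h2 h3 h4 h5 hsf h5rad
end
end
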